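/- Every Boolean function f: Bool^n → Bool can be represented by an implicative normal form: there exist a natural number k ≤ n and monotone Boolean functions P_0, P_1, …, P_k: Bool^n → Bool such that for all x ∈ Bool^n, f(x) = ((…((P_k(x) → P_{k−1}(x)) → P_{k−2}(x)) → … ) → P_1(x)) → P_0(x), i.e. f equals the left-nested chain of implications P_k → P_{k−1} → … → P_0 of monotone Boolean functions. -/

import Mathlib

/-!
Rank `Bool^n` by the number of `true` coordinates, and let `P_i` be `false` below rank
`n - i`, `true` above it, and an arbitrary `c` on rank `n - i` itself. Distinct points of
equal rank are incomparable, so each `P_i` is monotone whatever `c` is. At a point `x` of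
rank `r` the chain `P_n → … → P_0` reads `true → … → true → c x → false → … → false` with
`n - r` trailing `false`s, so it evaluates to `c x` negated `n - r` times; choose `c`
to undo these negations.
-/

/-- Boolean implication `a → b = ¬a ∨ b`. -/
def bimp (a b : Bool) : Bool := !a || b

/-- The left-nested implication chain
`((…((P_k → P_{k−1}) → P_{k−2}) → …) → P_1) → P_0`,
where `P : Fin (k+1) → Bool` with `P i` playing the role of `P_i`. -/
def impChain : (k : ℕ) → (Fin (k + 1) → Bool) → Bool
  | 0, P => P 0
  | k + 1, P => bimp (impChain k fun i => P i.succ) (P 0)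

def boolStep (j : ℕ) (b : Bool) (i : ℕ) : Bool :=
  if j < i then true else if i = j then b else false

lemma boolStep_succ_succ (j i : ℕ) (b : Bool) : boolStep (j + 1) b (i + 1) = boolStep j b i := by
  simp [boolStep]

lemma boolStep_sub_comm {n i r : ℕ} (hi : i ≤ n) (hr : r ≤ n) (b : Bool) :
    boolStep (n - i) b r = boolStep (n - r) b i := by
  simp only [boolStep, show n - i < r ↔ n - r < i by omega, show r = n - i ↔ i = n - r by omega]

lemma impChain_const_true (k : ℕ) : impChain k (fun _ => true) = true := by
  induction k with
  | zero => rfl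
  | succ k ih => simp [impChain, ih, bimp]

lemma impChain_boolStep {k j : ℕ} (hj : j ≤ k) (b : Bool) :
    impChain k (fun i => boolStep j b i) = (b ^^ j.bodd) := by
  induction k generalizing j with
  | zero =>
    obtain rfl : j = 0 := by omega
    simp [impChain, boolStep]
  | succ k ih =>
    cases j with
    | zero =>
      have h_true : (fun i : Fin (k + 1) => boolStep 0 b i.succ) = fun _ => true := by
        funext i
        simp [boolStep]
      simp only [impChain, h_true, impChain_const_true]
      simp [bimp, boolStep]
    | succ j =>
      simp only [impChain, Fin.val_succ, boolStep_succ_succ, ih (Nat.le_of_succ_le_succ hj)]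
      cases b <;> simp [bimp, boolStep]

lemma monotone_boolStep_comp {α : Type*} [PartialOrder α] {r : α → ℕ} (hr : StrictMono r)
    (j : ℕ) (c : α → Bool) : Monotone fun x => boolStep j (c x) (r x) := by
  intro x y hxy
  rcases hxy.lt_or_eq with hlt | rfl
  · have := hr hlt
    dsimp only [boolStep]
    split_ifs <;> first | omega | simp
  · rfl

theorem exists_monotone_impChain_of_strictMono {α : Type*} [PartialOrder α] {r : α → ℕ} {k : ℕ}
    (hr : StrictMono r) (hk : ∀ x, r x ≤ k) (f : α → Bool) :
    ∃ P : Fin (k + 1) → α → Bool,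
      (∀ i, Monotone (P i)) ∧ ∀ x, f x = impChain k (fun i => P i x) := by
  let c x := f x ^^ (k - r x).bodd
  refine ⟨fun i x => boolStep (k - i) (c x) (r x), fun i => monotone_boolStep_comp hr _ c, ?_⟩
  intro x
  have h_swap : (fun i : Fin (k + 1) => boolStep (k - i) (c x) (r x))
      = fun i : Fin (k + 1) => boolStep (k - r x) (c x) i := by
    funext i
    exact boolStep_sub_comm (Nat.le_of_lt_succ i.isLt) (hk x) _
  rw [h_swap, impChain_boolStep (Nat.sub_le _ _)]
  simp [c]

lemma strictMono_sum_toNat (n : ℕ) : StrictMono fun x : Fin n → Bool => ∑ j, (x j).toNat := by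
  intro x y hxy
  obtain ⟨hle, j, hlt⟩ := Pi.lt_def.mp hxy
  refine Fintype.sum_strictMono (Pi.lt_def.mpr ⟨fun i => Bool.toNat_le_toNat (hle i), j, ?_⟩)
  revert hlt
  cases x j <;> cases y j <;> decide

lemma sum_toNat_le (n : ℕ) (x : Fin n → Bool) : ∑ j, (x j).toNat ≤ n := by
  simpa using Finset.sum_le_sum fun j (_ : j ∈ Finset.univ) => Bool.toNat_le (x j)

/-- Corollary: every Boolean function `f : Bool^n → Bool` has an implicative
normal form `f = P_k → P_{k−1} → … → P_0` (associated to the left) with `k ≤ n`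
and all `Pᵢ` monotone Boolean functions. -/
theorem implicative_normal_form
    (n : ℕ) (f : (Fin n → Bool) → Bool) :
    ∃ k ≤ n, ∃ P : Fin (k + 1) → (Fin n → Bool) → Bool,
      (∀ i, Monotone (P i)) ∧
        ∀ x : Fin n → Bool, f x = impChain k (fun i => P i x) :=
  ⟨n, le_rfl, exists_monotone_impChain_of_strictMono (strictMono_sum_toNat n) (sum_toNat_le n) f⟩
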